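/- Consider the m-dimensional lattice Kuramoto model with r-nearest neighbor coupling (r ≥ 1) and the (q1,…,qm)-twisted state. Let S_r = {(i1,…,im) ∈ ℤᵐ : Σ_{j=1}^m i_j² ≤ r²}. If 4·max over (i1,…,im) ∈ S_r of Σ_{j=1}^m |i_j|·|q_j| < L, then the Jacobian matrix J at the twisted state is negative semidefinite and its kernel is one-dimensional, spanned by the all-ones vector; hence all eigenvalues of J other than the simple eigenvalue 0 are strictly negative (the twisted state is asymptotically stable). -/
import Mathlib


noncomputable section
open Real Finset Matrix

/-- Toroidal squared distance on the `m`-dimensional lattice `(ZMod L)ᵐ`: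
`d(x,y) = Σ_j min(|x_j−y_j|, L−|x_j−y_j|)²` with representatives in `{0,…,L−1}`. -/
def torDistM (L m : ℕ) (x y : Fin m → ZMod L) : ℕ :=
  ∑ j, (min (((x j).val : ℤ) - ((y j).val : ℤ)).natAbs
      (L - (((x j).val : ℤ) - ((y j).val : ℤ)).natAbs)) ^ 2

/-- Adjacency with real coupling range `r`: `A(x,y) = 1` iff `0 < d(x,y) ≤ r²`, else `0`. -/
def adjRM (L m : ℕ) (r : ℝ) (x y : Fin m → ZMod L) : ℝ :=
  if 0 < torDistM L m x y ∧ (torDistM L m x y : ℝ) ≤ r ^ 2 then 1 else 0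

/-- Adjacency with integer squared coupling range `r2`:
`A(x,y) = 1` iff `0 < d(x,y) ≤ r2`, else `0`. -/
def adjNM (L m r2 : ℕ) (x y : Fin m → ZMod L) : ℝ :=
  if 0 < torDistM L m x y ∧ torDistM L m x y ≤ r2 then 1 else 0

/-- The `(q1,…,qm)`-twisted state `θ_x = Σ_j 2π q_j x_j / L + C`. -/
def twistedM (L m : ℕ) (q : Fin m → ℤ) (C : ℝ) (x : Fin m → ZMod L) : ℝ :=
  (∑ j, 2 * π * q j * (x j).val / L) + C

/-- Jacobian of the `m`-dimensional lattice Kuramoto model (real range `r`) at configuration `u`. -/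
def jacRM (L m : ℕ) [NeZero L] (r : ℝ) (u : (Fin m → ZMod L) → ℝ) :
    Matrix (Fin m → ZMod L) (Fin m → ZMod L) ℝ :=
  fun x y =>
    if x = y then -∑ z, adjRM L m r x z * Real.cos (u z - u x)
    else adjRM L m r x y * Real.cos (u y - u x)

/-- Jacobian of the `m`-dimensional lattice Kuramoto model (integer squared range `r2`) at
configuration `u`. -/
def jacNM (L m : ℕ) [NeZero L] (r2 : ℕ) (u : (Fin m → ZMod L) → ℝ) :
    Matrix (Fin m → ZMod L) (Fin m → ZMod L) ℝ :=
  fun x y =>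
    if x = y then -∑ z, adjNM L m r2 x z * Real.cos (u z - u x)
    else adjNM L m r2 x y * Real.cos (u y - u x)

/-- Auxiliary: a minimal toroidal representative of an integer modulo `L`. -/
lemma exists_rep_aux (L : ℕ) (δ : ℤ) (hδ : δ.natAbs < L) :
    ∃ e k : ℤ, e.natAbs = min δ.natAbs (L - δ.natAbs) ∧ δ - e = L * k := by
  rcases le_or_gt (δ.natAbs) (L - δ.natAbs) with hle | hlt
  · exact ⟨δ, 0, by omega, by ring⟩
  · rcases le_or_gt 0 δ with hpos | hneg
    · exact ⟨δ - L, 1, by omega, by ring⟩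
    · exact ⟨δ + L, -1, by omega, by ring⟩

/-- Auxiliary: quadratic form identity for symmetric weights. -/
lemma quad_identity_aux {X : Type*} [Fintype X] (W : X → X → ℝ)
    (hs : ∀ x y, W x y = W y x) (v : X → ℝ) :
    ∑ x, ∑ y, W x y * (v x - v y) ^ 2
      = 2 * ((∑ x, (∑ z, W x z) * v x ^ 2) - ∑ x, ∑ y, W x y * (v x * v y)) := by
  have h3 : ∑ x, ∑ y, W x y * v y ^ 2 = ∑ x, ∑ y, W x y * v x ^ 2 := by
    rw [Finset.sum_comm]
    exact Finset.sum_congr rfl fun x _ => Finset.sum_congr rfl fun y _ => by rw [hs]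
  have expand : ∑ x, ∑ y, W x y * (v x - v y) ^ 2
      = (∑ x, ∑ y, W x y * v x ^ 2) + (∑ x, ∑ y, W x y * v y ^ 2)
        - 2 * ∑ x, ∑ y, W x y * (v x * v y) := by
    rw [← Finset.sum_add_distrib, Finset.mul_sum, ← Finset.sum_sub_distrib]
    refine Finset.sum_congr rfl fun x _ => ?_
    rw [← Finset.sum_add_distrib, Finset.mul_sum, ← Finset.sum_sub_distrib]
    exact Finset.sum_congr rfl fun y _ => by ring
  rw [expand, h3]
  have h4 : ∑ x, ∑ y, W x y * v x ^ 2 = ∑ x, (∑ z, W x z) * v x ^ 2 :=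
    Finset.sum_congr rfl fun x _ => by rw [Finset.sum_mul]
  rw [h4]; ring

/-- Auxiliary: positivity of the cosine of the phase differences of the twisted state. -/
lemma cos_twisted_pos_aux (L m : ℕ) [NeZero L] (r : ℝ) (q : Fin m → ℤ) (C : ℝ)
    (h : ∀ i : Fin m → ℤ, (∑ j, ((i j : ℝ)) ^ 2) ≤ r ^ 2 →
      4 * ∑ j, |i j| * |q j| < (L : ℤ))
    (x z : Fin m → ZMod L) (hd : (torDistM L m x z : ℝ) ≤ r ^ 2) :
    0 < Real.cos (twistedM L m q C z - twistedM L m q C x) := by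
  have hLpos : 0 < L := Nat.pos_of_ne_zero (NeZero.ne L)
  have hL : (0:ℝ) < L := by exact_mod_cast hLpos
  set δ : Fin m → ℤ := fun j => ((z j).val : ℤ) - ((x j).val : ℤ) with hδdef
  have hδ : ∀ j, (δ j).natAbs < L := by
    intro j
    have h1 : (z j).val < L := ZMod.val_lt _
    have h2 : (x j).val < L := ZMod.val_lt _
    simp only [hδdef]; omega
  choose e k he hk using fun j => exists_rep_aux L (δ j) (hδ j)
  have hdist : torDistM L m x z = ∑ j, (e j).natAbs ^ 2 := by
    unfold torDistM
    refine Finset.sum_congr rfl fun j _ => ?_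
    rw [he j]
    have : (((x j).val : ℤ) - ((z j).val : ℤ)).natAbs = (δ j).natAbs := by
      simp only [hδdef]; omega
    rw [this]
  have he2 : (∑ j, ((e j : ℝ)) ^ 2) ≤ r ^ 2 := by
    have hc : (∑ j, ((e j : ℝ)) ^ 2) = (torDistM L m x z : ℝ) := by
      rw [hdist]
      push_cast [Nat.cast_natAbs]
      exact Finset.sum_congr rfl fun j _ => by rw [sq_abs]
    linarith
  have hS := h e he2
  set S : ℤ := ∑ j, q j * e j with hSdef
  set K : ℤ := ∑ j, q j * k j with hKdef
  have hangle : twistedM L m q C z - twistedM L m q C x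
      = 2 * π * (S : ℝ) / L + (K : ℝ) * (2 * π) := by
    unfold twistedM
    rw [add_sub_add_right_eq_sub, ← Finset.sum_sub_distrib]
    have hterm : ∀ j ∈ Finset.univ, 2 * π * (q j : ℝ) * ((z j).val : ℝ) / L
        - 2 * π * (q j : ℝ) * ((x j).val : ℝ) / L
        = 2 * π * ((q j * e j : ℤ) : ℝ) / L + ((q j * k j : ℤ) : ℝ) * (2 * π) := by
      intro j _
      have hkj : ((z j).val : ℝ) - ((x j).val : ℝ) = (e j : ℝ) + L * (k j : ℝ) := by
        have h1 : δ j = e j + L * k j := by linarith [hk j]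
        have h2 : ((δ j : ℤ) : ℝ) = (e j : ℝ) + (L : ℝ) * (k j : ℝ) := by
          exact_mod_cast congrArg (Int.cast : ℤ → ℝ) h1
        simp only [hδdef] at h2; push_cast at h2 ⊢; linarith
      have hLne : (L : ℝ) ≠ 0 := hL.ne'
      rw [Int.cast_mul, Int.cast_mul]
      linear_combination (2 * π * (q j : ℝ) / L) * hkj
        + (2 * π * (q j : ℝ) * (k j : ℝ)) * (mul_inv_cancel₀ hLne)
    rw [Finset.sum_congr rfl hterm, Finset.sum_add_distrib]
    simp only [hSdef, hKdef]
    push_cast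
    rw [← Finset.sum_div, ← Finset.mul_sum, ← Finset.sum_mul]
  rw [hangle, Real.cos_add_int_mul_two_pi]
  have habs : |S| ≤ ∑ j, |e j| * |q j| := by
    calc |S| ≤ ∑ j, |q j * e j| := Finset.abs_sum_le_sum_abs _ _
    _ = ∑ j, |e j| * |q j| := Finset.sum_congr rfl fun j _ => by rw [abs_mul, mul_comm]
  have h4S : 4 * |S| < (L : ℤ) := by omega
  have h4Sr : |(S : ℝ)| < (L : ℝ) / 4 := by
    have h5 : (4:ℝ) * |(S : ℝ)| < (L : ℝ) := by exact_mod_cast h4S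
    linarith
  have hpi := Real.pi_pos
  have hbound : |2 * π * (S : ℝ) / L| < π / 2 := by
    rw [abs_div, abs_mul, abs_of_pos (by linarith : (0:ℝ) < 2 * π), abs_of_pos hL]
    rw [div_lt_iff₀ hL]
    calc 2 * π * |(S:ℝ)| < 2 * π * ((L:ℝ)/4) :=
          mul_lt_mul_of_pos_left h4Sr (by linarith)
    _ = π / 2 * L := by ring
  apply Real.cos_pos_of_mem_Ioo
  constructor
  · linarith [abs_lt.mp hbound |>.1]
  · linarith [abs_lt.mp hbound |>.2]

/-- General stability criterion (Theorem 4 of the paper): for `r`-nearest neighbor coupling on an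
`m`-dimensional lattice, if `4 max_{(i₁,…,iₘ) ∈ S_r} Σ_j |i_j||q_j| < L` (where
`S_r = {i ∈ ℤᵐ : Σ_j i_j² ≤ r²}`), then the Jacobian at the `(q1,…,qm)`-twisted state is negative
semidefinite with one-dimensional kernel spanned by the all-ones vector, and all eigenvalues other
than the simple eigenvalue `0` are strictly negative (asymptotic stability). -/
theorem general_lattice_stable (L m : ℕ) [NeZero L] (hm : 1 ≤ m) (r : ℝ) (hr : 1 ≤ r)
    (q : Fin m → ℤ) (C : ℝ)
    (h : ∀ i : Fin m → ℤ, (∑ j, ((i j : ℝ)) ^ 2) ≤ r ^ 2 →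
      4 * ∑ j, |i j| * |q j| < (L : ℤ)) :
    (∀ x : (Fin m → ZMod L) → ℝ,
      x ⬝ᵥ (jacRM L m r (twistedM L m q C)).mulVec x ≤ 0) ∧
    (jacRM L m r (twistedM L m q C)).mulVec (Function.const _ 1) = 0 ∧
    (∀ y : (Fin m → ZMod L) → ℝ,
      (jacRM L m r (twistedM L m q C)).mulVec y = 0 → ∃ c : ℝ, y = Function.const _ c) ∧
    (∀ μ : ℝ, Module.End.HasEigenvalue
      (Matrix.toLin' (jacRM L m r (twistedM L m q C))) μ → μ ≠ 0 → μ < 0) := by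
  set u := twistedM L m q C with hu
  set J := jacRM L m r u with hJdef
  set W : (Fin m → ZMod L) → (Fin m → ZMod L) → ℝ :=
    fun x y => adjRM L m r x y * Real.cos (u y - u x) with hWdef
  have htsym : ∀ x y : Fin m → ZMod L, torDistM L m x y = torDistM L m y x := by
    intro x y; unfold torDistM
    refine Finset.sum_congr rfl fun j _ => ?_
    have hh : (((x j).val : ℤ) - ((y j).val : ℤ)).natAbs
        = (((y j).val : ℤ) - ((x j).val : ℤ)).natAbs := by omega
    rw [hh]
  have hWs : ∀ x y, W x y = W y x := by
    intro x y
    simp only [hWdef, adjRM, htsym x y]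
    congr 1
    rw [← Real.cos_neg, neg_sub]
  have hW0 : ∀ x, W x x = 0 := by
    intro x
    have hz : torDistM L m x x = 0 := by
      unfold torDistM; apply Finset.sum_eq_zero; intro j _; simp
    simp [hWdef, adjRM, hz]
  have hWnn : ∀ x y, 0 ≤ W x y := by
    intro x y
    simp only [hWdef, adjRM]
    split
    · next hcond =>
        have := cos_twisted_pos_aux L m r q C h x y hcond.2
        rw [one_mul]; exact this.le
    · simp
  have hWpos : ∀ x y, 0 < torDistM L m x y → (torDistM L m x y : ℝ) ≤ r ^ 2 → 0 < W x y := by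
    intro x y h1 h2
    simp only [hWdef, adjRM, if_pos (And.intro h1 h2), one_mul]
    exact cos_twisted_pos_aux L m r q C h x y h2
  have hrow : ∀ (v : (Fin m → ZMod L) → ℝ) x,
      J.mulVec v x = (∑ y, W x y * v y) - (∑ z, W x z) * v x := by
    intro v x
    have hmv : J.mulVec v x = ∑ y, J x y * v y := rfl
    rw [hmv, ← Finset.add_sum_erase _ _ (Finset.mem_univ x)]
    have h1 : J x x = -(∑ z, W x z) := by simp [hJdef, jacRM, hWdef]
    have h2 : ∀ y ∈ Finset.univ.erase x, J x y * v y = W x y * v y := by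
      intro y hy
      have hxy : ¬ x = y := fun hc => (Finset.mem_erase.mp hy).1 hc.symm
      simp [hJdef, jacRM, hWdef, hxy]
    rw [Finset.sum_congr rfl h2, h1]
    have h3 : ∑ y ∈ Finset.univ.erase x, W x y * v y = ∑ y, W x y * v y :=
      Finset.sum_erase _ (by rw [hW0]; ring)
    rw [h3]; ring
  have hQ : ∀ v : (Fin m → ZMod L) → ℝ,
      v ⬝ᵥ J.mulVec v = -(1/2) * ∑ x, ∑ y, W x y * (v x - v y) ^ 2 := by
    intro v
    have h1 : v ⬝ᵥ J.mulVec v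
        = (∑ x, ∑ y, W x y * (v x * v y)) - ∑ x, (∑ z, W x z) * v x ^ 2 := by
      rw [dotProduct, ← Finset.sum_sub_distrib]
      refine Finset.sum_congr rfl fun x _ => ?_
      rw [hrow v x, mul_sub]
      congr 1
      · rw [Finset.mul_sum]; exact Finset.sum_congr rfl fun y _ => by ring
      · ring
    rw [h1, quad_identity_aux W hWs v]; ring
  have claim1 : ∀ v : (Fin m → ZMod L) → ℝ, v ⬝ᵥ J.mulVec v ≤ 0 := by
    intro v
    rw [hQ v]
    have hnn : 0 ≤ ∑ x, ∑ y, W x y * (v x - v y) ^ 2 :=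
      Finset.sum_nonneg fun x _ => Finset.sum_nonneg fun y _ =>
        mul_nonneg (hWnn x y) (sq_nonneg _)
    linarith
  have claim2 : J.mulVec (Function.const _ 1) = 0 := by
    funext x
    rw [hrow]
    simp [Function.const]
  have claim3 : ∀ y : (Fin m → ZMod L) → ℝ,
      J.mulVec y = 0 → ∃ c : ℝ, y = Function.const _ c := by
    intro y hy
    have hQ0 : ∑ x, ∑ z, W x z * (y x - y z) ^ 2 = 0 := by
      have hdot : y ⬝ᵥ J.mulVec y = 0 := by rw [hy]; simp [dotProduct]
      rw [hQ y] at hdot; linarith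
    have hterm : ∀ x z, W x z * (y x - y z) ^ 2 = 0 := by
      intro x z
      have h1 := (Finset.sum_eq_zero_iff_of_nonneg (fun x _ =>
        Finset.sum_nonneg fun z _ => mul_nonneg (hWnn x z) (sq_nonneg _))).mp
        hQ0 x (Finset.mem_univ x)
      exact (Finset.sum_eq_zero_iff_of_nonneg (fun z _ =>
        mul_nonneg (hWnn x z) (sq_nonneg _))).mp h1 z (Finset.mem_univ z)
    have hadj : ∀ x z, 0 < torDistM L m x z → (torDistM L m x z : ℝ) ≤ r ^ 2 → y x = y z := by
      intro x z h1 h2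
      have hw := hWpos x z h1 h2
      have ht := hterm x z
      have h3 : (y x - y z) ^ 2 = 0 := by
        rcases mul_eq_zero.mp ht with h4 | h4
        · exact absurd h4 hw.ne'
        · exact h4
      have h5 : y x - y z = 0 := by
        have := sq_eq_zero_iff.mp h3; exact this
      linarith
    by_cases hL1 : L = 1
    · subst hL1
      refine ⟨y (fun _ => 0), funext fun x => ?_⟩
      have hx : x = (fun _ => 0) := funext fun j => Subsingleton.elim _ _
      rw [hx]; rfl
    · have hL2 : 2 ≤ L := by have := Nat.pos_of_ne_zero (NeZero.ne L); omega
      have hr2 : (1:ℝ) ≤ r ^ 2 := by nlinarith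
      have hstep : ∀ (x : Fin m → ZMod L) (j : Fin m),
          y x = y (Function.update x j (x j + 1)) := by
        intro x j
        have hd1 : torDistM L m x (Function.update x j (x j + 1)) = 1 := by
          unfold torDistM
          rw [Finset.sum_eq_single j]
          · rw [Function.update_self]
            have hvlt : (x j).val < L := ZMod.val_lt _
            have hval : (x j + 1).val = ((x j).val + 1) % L := by
              haveI : Fact (1 < L) := ⟨hL2⟩
              rw [ZMod.val_add, ZMod.val_one]
            rw [hval]
            have hmin : min (((x j).val : ℤ) - ((((x j).val + 1) % L : ℕ) : ℤ)).natAbs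
                (L - (((x j).val : ℤ) - ((((x j).val + 1) % L : ℕ) : ℤ)).natAbs) = 1 := by
              rcases Nat.lt_or_ge ((x j).val + 1) L with hlt | hge
              · rw [Nat.mod_eq_of_lt hlt]; omega
              · have h8 : (x j).val + 1 = L := by omega
                have h9 : ((x j).val + 1) % L = 0 := by rw [h8, Nat.mod_self]
                rw [h9]; omega
            rw [hmin]; norm_num
          · intro k _ hk; rw [Function.update_of_ne hk]; simp
          · intro hj; exact absurd (Finset.mem_univ j) hj
        apply hadj
        · rw [hd1]; omega
        · rw [hd1]; push_cast; linarith
      have hstepn : ∀ (x : Fin m → ZMod L) (j : Fin m) (n : ℕ),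
          y x = y (Function.update x j (x j + n)) := by
        intro x j n
        induction n with
        | zero => simp
        | succ n ih =>
          rw [ih]
          have h1 := hstep (Function.update x j (x j + n)) j
          rw [Function.update_self, Function.update_idem] at h1
          have h2 : x j + (n : ZMod L) + 1 = x j + ((n + 1 : ℕ) : ZMod L) := by
            push_cast; ring
          rw [h2] at h1
          exact h1
      have hzero : ∀ (x : Fin m → ZMod L) (j : Fin m), y x = y (Function.update x j 0) := by
        intro x j
        have hx := hstepn x j (L - (x j).val)
        have hv : x j + ((L - (x j).val : ℕ) : ZMod L) = 0 := by
          have h1 : (x j).val + (L - (x j).val) = L := by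
            have := ZMod.val_lt (x j); omega
          have h2 : (((x j).val : ℕ) : ZMod L) = x j := by simp [ZMod.natCast_val]
          calc x j + ((L - (x j).val : ℕ) : ZMod L)
              = (((x j).val : ℕ) : ZMod L) + ((L - (x j).val : ℕ) : ZMod L) := by rw [h2]
            _ = (((x j).val + (L - (x j).val) : ℕ) : ZMod L) := by rw [Nat.cast_add]
            _ = ((L : ℕ) : ZMod L) := by rw [h1]
            _ = 0 := ZMod.natCast_self L
        rw [hv] at hx
        exact hx
      have hall : ∀ (x : Fin m → ZMod L) (n : ℕ),
          y x = y (fun k : Fin m => if (k : ℕ) < n then 0 else x k) := by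
        intro x n
        induction n with
        | zero => simp
        | succ n ih =>
          by_cases hn : n < m
          · rw [ih]
            have hz := hzero (fun k => if (k : ℕ) < n then 0 else x k) ⟨n, hn⟩
            have heq : Function.update (fun k : Fin m => if (k : ℕ) < n then 0 else x k)
                (⟨n, hn⟩ : Fin m) 0 = fun k : Fin m => if (k : ℕ) < n + 1 then 0 else x k := by
              funext k
              by_cases hk : k = (⟨n, hn⟩ : Fin m)
              · subst hk; simp [Function.update_self]
              · rw [Function.update_of_ne hk]
                have hkn : (k : ℕ) ≠ n := by
                  intro hc; exact hk (Fin.ext hc)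
                by_cases hkn2 : (k : ℕ) < n
                · rw [if_pos hkn2, if_pos (by omega)]
                · rw [if_neg hkn2, if_neg (by omega)]
            rw [heq] at hz
            exact hz
          · have heq : (fun k : Fin m => if (k : ℕ) < n + 1 then 0 else x k)
                = fun k : Fin m => if (k : ℕ) < n then 0 else x k := by
              funext k
              have := k.isLt
              rw [if_pos (by omega), if_pos (by omega)]
            rw [heq]
            exact ih
      refine ⟨y (fun _ => 0), funext fun x => ?_⟩
      have hx := hall x m
      have heq : (fun k : Fin m => if (k : ℕ) < m then 0 else x k)
          = (fun _ : Fin m => (0 : ZMod L)) := by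
        funext k; rw [if_pos k.isLt]
      rw [heq] at hx
      exact hx
  have claim4 : ∀ μ : ℝ, Module.End.HasEigenvalue (Matrix.toLin' J) μ → μ ≠ 0 → μ < 0 := by
    intro μ hμ hne
    obtain ⟨v, hv⟩ := hμ.exists_hasEigenvector
    have hv0 : v ≠ 0 := hv.2
    have happ : J.mulVec v = μ • v := by
      have := hv.apply_eq_smul
      rwa [Matrix.toLin'_apply] at this
    have h1 : v ⬝ᵥ J.mulVec v = μ * (v ⬝ᵥ v) := by
      rw [happ, dotProduct_smul]; rfl
    have h2 : 0 < v ⬝ᵥ v := by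
      have hnn : 0 ≤ v ⬝ᵥ v := Finset.sum_nonneg fun i _ => mul_self_nonneg _
      have hne2 : v ⬝ᵥ v ≠ 0 := fun hc => hv0 (dotProduct_self_eq_zero.mp hc)
      exact lt_of_le_of_ne hnn (Ne.symm hne2)
    have h3 := claim1 v
    rw [h1] at h3
    have h4 : μ ≤ 0 := by nlinarith
    exact lt_of_le_of_ne h4 hne
  exact ⟨claim1, claim2, claim3, claim4⟩
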